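/- In any execution of the fully dynamic algorithm, for every realization of the random choices and every level 0 ≤ ℓ ≤ L, the candidate set size satisfies |A_ℓ| ≤ 4n/2^ℓ (i.e., n/2^{ℓ−2}) at all times during the execution. -/

import Mathlib

open Finset

attribute [local instance] Classical.propDecidable

universe u

/-- A matroid on a ground set `α`, given as a nonempty, downward closed family of
finite independent sets satisfying the augmentation property. -/
structure MatroidOn (α : Type u) where
  Indep : Finset α → Prop
  nonempty : ∃ A, Indep A
  subset_indep : ∀ ⦃A B : Finset α⦄, A ⊆ B → Indep B → Indep A
  augment : ∀ ⦃A B : Finset α⦄, Indep A → Indep B → A.card < B.card →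
    ∃ e ∈ B, e ∉ A ∧ Indep (insert e A)

/-- Submodularity of a set function. -/
def SubmodularFn {α : Type u} [DecidableEq α] (f : Finset α → ℝ) : Prop :=
  ∀ X Y : Finset α, X ⊆ Y → ∀ e, e ∉ Y →
    f (insert e Y) - f Y ≤ f (insert e X) - f X

/-- Monotonicity of a set function. -/
def MonotoneFn {α : Type u} (f : Finset α → ℝ) : Prop :=
  ∀ X Y : Finset α, X ⊆ Y → f X ≤ f Y

variable {α : Type u} [DecidableEq α]

/-- The marginal gain `f(e | T) = f (T ∪ {e}) - f T`. -/
def marg (f : Finset α → ℝ) (T : Finset α) (e : α) : ℝ := f (insert e T) - f T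

/-- State of the fully dynamic algorithm.  For each level `ℓ ∈ {0, …, L}` it keeps the
candidate set `A ℓ`, the buffer `B ℓ`, the partial solution `S ℓ` and the set `S' ℓ`,
together with the weights `w`.  The fields `X ℓ` and `Y ℓ` record, for the most recent
execution of `Level-Construct(ℓ)`, the elements added to `S ℓ` there and the elements
filtered out there (they are empty if `Level-Construct(ℓ)` was never executed).
`V` is the set of elements currently inserted and not deleted.  The ghost fields
`maxA ℓ` and `maxB ℓ` record the largest cardinality ever attained by `A ℓ` and `B ℓ`
during the execution, and `insCalls ℓ` counts how many times `Level-Construct(ℓ)` was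
called directly from the `Insertion` routine. -/
structure DynState (α : Type u) where
  A : ℕ → Finset α
  B : ℕ → Finset α
  S : ℕ → Finset α
  S' : ℕ → Finset α
  w : α → ℝ
  X : ℕ → Finset α
  Y : ℕ → Finset α
  V : Finset α
  maxA : ℕ → ℕ
  maxB : ℕ → ℕ
  insCalls : ℕ → ℕ

/-- The initial state: everything is empty. -/
def DynState.init (α : Type u) : DynState α where
  A := fun _ => ∅
  B := fun _ => ∅
  S := fun _ => ∅
  S' := fun _ => ∅
  w := fun _ => 0
  X := fun _ => ∅
  Y := fun _ => ∅
  V := ∅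
  maxA := fun _ => 0
  maxB := fun _ => 0
  insCalls := fun _ => 0

/-- `A (ℓ-1)`, read as `∅` for `ℓ = 0`. -/
def prevA (st : DynState α) (ℓ : ℕ) : Finset α := if ℓ = 0 then ∅ else st.A (ℓ - 1)

/-- `B (ℓ-1)`, read as the current `B 0` for `ℓ = 0`. -/
def prevB (st : DynState α) (ℓ : ℕ) : Finset α := if ℓ = 0 then st.B 0 else st.B (ℓ - 1)

/-- `S (ℓ-1)`, read as `∅` for `ℓ = 0`. -/
def prevS (st : DynState α) (ℓ : ℕ) : Finset α := if ℓ = 0 then ∅ else st.S (ℓ - 1)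

/-- `S' (ℓ-1)`, read as `∅` for `ℓ = 0`. -/
def prevS' (st : DynState α) (ℓ : ℕ) : Finset α := if ℓ = 0 then ∅ else st.S' (ℓ - 1)

/-- Initialization of `Level-Construct(ℓ)`:
`A ℓ := A (ℓ-1) ∪ B (ℓ-1)`, `B ℓ := ∅`, `S ℓ := S (ℓ-1)`, `S' ℓ := S' (ℓ-1)`;
the record `Y ℓ` of elements filtered out in this execution is reset. -/
def initLevel (ℓ : ℕ) (st : DynState α) : DynState α :=
  { st with
    A := Function.update st.A ℓ (prevA st ℓ ∪ prevB st ℓ)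
    B := Function.update st.B ℓ ∅
    S := Function.update st.S ℓ (prevS st ℓ)
    S' := Function.update st.S' ℓ (prevS' st ℓ)
    Y := Function.update st.Y ℓ ∅
    maxA := Function.update st.maxA ℓ (max (st.maxA ℓ) (prevA st ℓ ∪ prevB st ℓ).card) }

/-- The set `E ℓ` of candidates that can be added to `S ℓ` keeping independence. -/
noncomputable def Eset (M : MatroidOn α) (ℓ : ℕ) (st : DynState α) : Finset α :=
  (st.A ℓ).filter fun e => M.Indep (insert e (st.S ℓ))

/-- The set `F ℓ` of candidates `e` that cannot be added directly but admit a
minimum-weight swap `y` with `w e > 2 · w y` (weights given by `w1`). -/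
noncomputable def Fset (M : MatroidOn α) (ℓ : ℕ) (st : DynState α) (w1 : α → ℝ) : Finset α :=
  (st.A ℓ).filter fun e =>
    ¬ M.Indep (insert e (st.S ℓ)) ∧
      ∃ y ∈ st.S ℓ, M.Indep (insert e ((st.S ℓ).erase y)) ∧
        (∀ z ∈ st.S ℓ, M.Indep (insert e ((st.S ℓ).erase z)) → w1 y ≤ w1 z) ∧
        2 * w1 y < w1 e

/-- The deterministic part of one iteration of the repeat loop of `Level-Construct(ℓ)`:
every `e ∈ A ℓ` gets weight `w e := f(e | S' ℓ)`, and `A ℓ` is replaced by `E ℓ ∪ F ℓ`;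
the filtered-out elements `A ℓ \ (E ℓ ∪ F ℓ)` are accumulated into `Y ℓ`. -/
noncomputable def filterState (f : Finset α → ℝ) (M : MatroidOn α) (ℓ : ℕ) (st : DynState α) :
    DynState α :=
  let w1 : α → ℝ := fun e =>
    if e ∈ st.A ℓ then f (insert e (st.S' ℓ)) - f (st.S' ℓ) else st.w e
  let Anew := Eset M ℓ st ∪ Fset M ℓ st w1
  { st with
    A := Function.update st.A ℓ Anew
    w := w1
    Y := Function.update st.Y ℓ (st.Y ℓ ∪ (st.A ℓ \ Anew))
    maxA := Function.update st.maxA ℓ (max (st.maxA ℓ) Anew.card) }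

/-- Auxiliary state transformation: pop `e` from `A ℓ`, replace `S ℓ` by `Snew` and add
`e` to `S' ℓ`. -/
def popState (ℓ : ℕ) (st : DynState α) (e : α) (Snew : Finset α) : DynState α :=
  { st with
    A := Function.update st.A ℓ ((st.A ℓ).erase e)
    S := Function.update st.S ℓ Snew
    S' := Function.update st.S' ℓ (insert e (st.S' ℓ))
    maxA := Function.update st.maxA ℓ (max (st.maxA ℓ) ((st.A ℓ).erase e).card) }

/-- Popping an arbitrary element `e` from `A ℓ` (the element popped is chosen uniformly at
random; the relation allows every possible choice) and adding it to the solution, swapping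
out a minimum-weight element `y` if necessary. -/
inductive LCPop (M : MatroidOn α) (ℓ : ℕ) : DynState α → DynState α → Prop
  | add {st : DynState α} {e : α} (he : e ∈ st.A ℓ)
      (hind : M.Indep (insert e (st.S ℓ))) :
      LCPop M ℓ st (popState ℓ st e (insert e (st.S ℓ)))
  | swap {st : DynState α} {e y : α} (he : e ∈ st.A ℓ)
      (hind : ¬ M.Indep (insert e (st.S ℓ)))
      (hy : y ∈ st.S ℓ) (hyind : M.Indep (insert e ((st.S ℓ).erase y)))
      (hmin : ∀ z ∈ st.S ℓ, M.Indep (insert e ((st.S ℓ).erase z)) → st.w y ≤ st.w z) :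
      LCPop M ℓ st (popState ℓ st e (insert e ((st.S ℓ).erase y)))

/-- One iteration of the repeat loop of `Level-Construct(ℓ)`: filter, and pop one random
element if `|A ℓ| ≥ n / 2^ℓ` still holds after filtering. -/
inductive LCBody (f : Finset α → ℝ) (M : MatroidOn α) (n ℓ : ℕ) :
    DynState α → DynState α → Prop
  | nopop {st : DynState α}
      (h : ((filterState f M ℓ st).A ℓ).card < n / 2 ^ ℓ) :
      LCBody f M n ℓ st (filterState f M ℓ st)
  | pop {st st' : DynState α}
      (h : ¬ ((filterState f M ℓ st).A ℓ).card < n / 2 ^ ℓ)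
      (hp : LCPop M ℓ (filterState f M ℓ st) st') :
      LCBody f M n ℓ st st'

/-- The repeat loop of `Level-Construct(ℓ)`, iterated until `|A ℓ| < n / 2^ℓ`. -/
inductive LCLoop (f : Finset α → ℝ) (M : MatroidOn α) (n ℓ : ℕ) :
    DynState α → DynState α → Prop
  | done {st st' : DynState α} (hb : LCBody f M n ℓ st st')
      (h : (st'.A ℓ).card < n / 2 ^ ℓ) : LCLoop f M n ℓ st st'
  | more {st st' st'' : DynState α} (hb : LCBody f M n ℓ st st')
      (h : ¬ (st'.A ℓ).card < n / 2 ^ ℓ)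
      (hrest : LCLoop f M n ℓ st' st'') : LCLoop f M n ℓ st st''

/-- Record `X ℓ := S ℓ \ S (ℓ-1)` at the end of an execution of `Level-Construct(ℓ)`. -/
def setXlevel (ℓ : ℕ) (st : DynState α) : DynState α :=
  { st with X := Function.update st.X ℓ (st.S ℓ \ prevS st ℓ) }

/-- `LC f M n L ℓ st st'` : a full execution of `Level-Construct(ℓ)` (including the
recursive calls at levels `ℓ+1, …, L`) starting from state `st` may end in state `st'`. -/
inductive LC (f : Finset α → ℝ) (M : MatroidOn α) (n L : ℕ) :
    ℕ → DynState α → DynState α → Prop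
  | last {st st' : DynState α} (hloop : LCLoop f M n L (initLevel L st) st') :
      LC f M n L L st (setXlevel L st')
  | step {ℓ : ℕ} {st st' st'' : DynState α} (hℓ : ℓ < L)
      (hloop : LCLoop f M n ℓ (initLevel ℓ st) st')
      (hnext : LC f M n L (ℓ + 1) (setXlevel ℓ st') st'') :
      LC f M n L ℓ st st''

/-- Add the newly inserted element `e` to every buffer `B ℓ`, `0 ≤ ℓ ≤ L`, and to `V`. -/
def insB (L : ℕ) (e : α) (st : DynState α) : DynState α :=
  { st with
    B := fun m => if m ≤ L then insert e (st.B m) else st.B m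
    V := insert e st.V
    maxB := fun m =>
      if m ≤ L then max (st.maxB m) (insert e (st.B m)).card else st.maxB m }

/-- Increment the counter of direct calls to `Level-Construct(ℓ)` from `Insertion`. -/
def bumpIns (ℓ : ℕ) (st : DynState α) : DynState α :=
  { st with insCalls := Function.update st.insCalls ℓ (st.insCalls ℓ + 1) }

/-- Remove the deleted element `e` from every `A ℓ` and `B ℓ`, and from `V`. -/
def delElems (e : α) (st : DynState α) : DynState α :=
  { st with
    A := fun m => (st.A m).erase e
    B := fun m => (st.B m).erase e
    V := st.V.erase e }

/-- A stream operation: insertion or deletion of an element. -/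
inductive Oper (α : Type u)
  | ins (e : α)
  | del (e : α)

/-- Whether an operation is an insertion. -/
def Oper.isIns : Oper α → Bool
  | .ins _ => true
  | .del _ => false

/-- Processing one operation of the stream.  An insertion adds `e` to all buffers and, if
some level `ℓ ≤ L` has `|B ℓ| ≥ n / 2^ℓ`, calls `Level-Construct(ℓ*)` for the smallest
such `ℓ*`.  A deletion (of a previously inserted, not yet deleted element) removes `e`
from all `A ℓ` and `B ℓ` and, if `e ∈ S ℓ` for some `ℓ ≤ L`, calls `Level-Construct(ℓ)`
for the smallest such `ℓ`. -/
inductive DynStep (f : Finset α → ℝ) (M : MatroidOn α) (n L : ℕ) :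
    DynState α → Oper α → DynState α → Prop
  | insTrigger {st st' : DynState α} {e : α} (ℓs : ℕ) (he : e ∉ st.V)
      (hℓ : ℓs ≤ L) (hbig : n / 2 ^ ℓs ≤ ((insB L e st).B ℓs).card)
      (hmin : ∀ m, m ≤ L → n / 2 ^ m ≤ ((insB L e st).B m).card → ℓs ≤ m)
      (hlc : LC f M n L ℓs (bumpIns ℓs (insB L e st)) st') :
      DynStep f M n L st (.ins e) st'
  | insNoTrigger {st : DynState α} {e : α} (he : e ∉ st.V)
      (h : ∀ m ≤ L, ((insB L e st).B m).card < n / 2 ^ m) :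
      DynStep f M n L st (.ins e) (insB L e st)
  | delTrigger {st st' : DynState α} {e : α} (ℓ : ℕ) (he : e ∈ st.V)
      (hℓ : ℓ ≤ L) (hin : e ∈ st.S ℓ)
      (hmin : ∀ m, m ≤ L → e ∈ st.S m → ℓ ≤ m)
      (hlc : LC f M n L ℓ (delElems e st) st') :
      DynStep f M n L st (.del e) st'
  | delNoTrigger {st : DynState α} {e : α} (he : e ∈ st.V)
      (h : ∀ m ≤ L, e ∉ st.S m) :
      DynStep f M n L st (.del e) (delElems e st)

/-- `DynRun f M n L ops st` : some execution of the fully dynamic algorithm processing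
the stream `ops` (for some realization of the random choices) ends in state `st`. -/
inductive DynRun (f : Finset α → ℝ) (M : MatroidOn α) (n L : ℕ) :
    List (Oper α) → DynState α → Prop
  | nil : DynRun f M n L [] (DynState.init α)
  | snoc {ops : List (Oper α)} {st st' : DynState α} {op : Oper α}
      (hrun : DynRun f M n L ops st) (hstep : DynStep f M n L st op st') :
      DynRun f M n L (ops ++ [op]) st'

/-! Between operations every level `m ≤ L` satisfies `|A m| < n / 2^m` and `|B m| < n / 2^m`:
a buffer reaching its threshold triggers `Level-Construct` at its level or below, which empties
the buffers from that level on and stops each repeat loop only once `|A m| < n / 2^m`. Inside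
`Level-Construct(ℓ)` the candidate set starts as `A (ℓ-1) ∪ B (ℓ-1)`, of size at most
`2 · n / 2^ℓ + 2 · n / 2^ℓ` because `n / 2^(ℓ-1) = 2 · n / 2^ℓ` (at `ℓ = 0`, `|B 0| ≤ n` right
after an insertion), and the repeat loop only shrinks it. -/

section CandidateBound

variable {f : Finset α → ℝ} {M : MatroidOn α} {n L ℓ : ℕ} {st st' : DynState α}

theorem div_two_pow_pred (h : 2 ^ ℓ ∣ n) (hℓ : 0 < ℓ) : n / 2 ^ (ℓ - 1) = 2 * (n / 2 ^ ℓ) := by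
  obtain ⟨k, rfl⟩ := h
  obtain ⟨j, rfl⟩ : ∃ j, ℓ = j + 1 := ⟨ℓ - 1, by omega⟩
  have h2 : 0 < 2 ^ j := by positivity
  rw [Nat.add_sub_cancel, pow_succ, mul_assoc, Nat.mul_div_cancel_left _ h2,
    Nat.mul_div_mul_left _ _ h2, Nat.mul_div_cancel_left _ two_pos]

theorem div_two_pow_pos (hn : n = 2 ^ L) {m : ℕ} (hm : m ≤ L) : 0 < n / 2 ^ m :=
  Nat.div_pos (hn ▸ Nat.pow_le_pow_right two_pos hm) (by positivity)

structure ShrinksAt (ℓ : ℕ) (st st' : DynState α) : Prop where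
  card_A_le : (st'.A ℓ).card ≤ (st.A ℓ).card
  maxA_le : st'.maxA ℓ ≤ max (st.maxA ℓ) (st.A ℓ).card
  A_eq : ∀ m ≠ ℓ, st'.A m = st.A m
  maxA_eq : ∀ m ≠ ℓ, st'.maxA m = st.maxA m
  B_eq : st'.B = st.B

omit [DecidableEq α] in
theorem ShrinksAt.trans {st'' : DynState α} (h₁ : ShrinksAt ℓ st st')
    (h₂ : ShrinksAt ℓ st' st'') : ShrinksAt ℓ st st'' where
  card_A_le := h₂.card_A_le.trans h₁.card_A_le
  maxA_le := h₂.maxA_le.trans (max_le h₁.maxA_le (le_max_of_le_right h₁.card_A_le))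
  A_eq m hm := (h₂.A_eq m hm).trans (h₁.A_eq m hm)
  maxA_eq m hm := (h₂.maxA_eq m hm).trans (h₁.maxA_eq m hm)
  B_eq := h₂.B_eq.trans h₁.B_eq

theorem shrinksAt_filterState : ShrinksAt ℓ st (filterState f M ℓ st) := by
  have hcard : ((filterState f M ℓ st).A ℓ).card ≤ (st.A ℓ).card := by
    simp only [filterState, Function.update_self]
    exact card_le_card (union_subset (filter_subset _ _) (filter_subset _ _))
  refine ⟨hcard, ?_, fun m hm => ?_, fun m hm => ?_, rfl⟩
  · simp only [filterState, Function.update_self] at hcard ⊢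
    exact max_le_max le_rfl hcard
  · simp [filterState, Function.update_of_ne hm]
  · simp [filterState, Function.update_of_ne hm]

theorem shrinksAt_popState {e : α} {S : Finset α} : ShrinksAt ℓ st (popState ℓ st e S) where
  card_A_le := by simpa [popState] using card_erase_le (s := st.A ℓ) (a := e)
  maxA_le := by
    simp only [popState, Function.update_self]
    exact max_le_max le_rfl card_erase_le
  A_eq m hm := by simp [popState, Function.update_of_ne hm]
  maxA_eq m hm := by simp [popState, Function.update_of_ne hm]
  B_eq := rfl

theorem LCPop.shrinksAt (h : LCPop M ℓ st st') : ShrinksAt ℓ st st' := by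
  cases h <;> exact shrinksAt_popState

theorem LCBody.shrinksAt (h : LCBody f M n ℓ st st') : ShrinksAt ℓ st st' := by
  cases h with
  | nopop => exact shrinksAt_filterState
  | pop _ hp => exact shrinksAt_filterState.trans hp.shrinksAt

theorem LCLoop.shrinksAt (h : LCLoop f M n ℓ st st') : ShrinksAt ℓ st st' := by
  induction h with
  | done hb => exact hb.shrinksAt
  | more hb _ _ ih => exact hb.shrinksAt.trans ih

theorem LCLoop.card_A_lt (h : LCLoop f M n ℓ st st') : (st'.A ℓ).card < n / 2 ^ ℓ := by
  induction h with
  | done _ h => exact h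
  | more _ _ _ ih => exact ih

def CandidatesBounded (n L : ℕ) (st : DynState α) : Prop :=
  ∀ m ≤ L, (st.A m).card < n / 2 ^ m ∧ st.maxA m ≤ 4 * (n / 2 ^ m)

def BuffersBounded (n L : ℕ) (st : DynState α) : Prop :=
  ∀ m ≤ L, (st.B m).card < n / 2 ^ m

theorem CandidatesBounded.delElems (h : CandidatesBounded n L st) (e : α) :
    CandidatesBounded n L (delElems e st) :=
  fun m hm => ⟨card_erase_le.trans_lt (h m hm).1, (h m hm).2⟩

theorem BuffersBounded.delElems (h : BuffersBounded n L st) (e : α) :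
    BuffersBounded n L (delElems e st) :=
  fun m hm => card_erase_le.trans_lt (h m hm)

omit [DecidableEq α] in
theorem card_prevA_le (hdvd : 2 ^ ℓ ∣ n) (hA : ∀ m < ℓ, (st.A m).card < n / 2 ^ m) :
    (prevA st ℓ).card ≤ 2 * (n / 2 ^ ℓ) := by
  unfold prevA
  split_ifs with h0
  · simp
  · have h := hA (ℓ - 1) (by omega)
    rw [div_two_pow_pred hdvd (by omega)] at h
    exact h.le

omit [DecidableEq α] in
theorem card_prevB_le (hdvd : 2 ^ ℓ ∣ n) (hB0 : (st.B 0).card ≤ n)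
    (hB : ∀ m < ℓ, (st.B m).card < n / 2 ^ m) : (prevB st ℓ).card ≤ 2 * (n / 2 ^ ℓ) := by
  unfold prevB
  split_ifs with h0
  · subst h0
    simp only [pow_zero, Nat.div_one]
    omega
  · have h := hB (ℓ - 1) (by omega)
    rw [div_two_pow_pred hdvd (by omega)] at h
    exact h.le

theorem LCLoop.candidatesBounded_of_initLevel (hn : n = 2 ^ L) (hℓ : ℓ ≤ L)
    (hloop : LCLoop f M n ℓ (initLevel ℓ st) st') (hst : CandidatesBounded n L st)
    (hB : (prevB st ℓ).card ≤ 2 * (n / 2 ^ ℓ)) :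
    CandidatesBounded n L st' ∧ st'.B = Function.update st.B ℓ ∅ := by
  have hshrink := hloop.shrinksAt
  have hinit : (prevA st ℓ ∪ prevB st ℓ).card ≤ 4 * (n / 2 ^ ℓ) := by
    have hA := card_prevA_le (hn ▸ pow_dvd_pow 2 hℓ) fun m hm => (hst m (by omega)).1
    have := card_union_le (prevA st ℓ) (prevB st ℓ)
    omega
  refine ⟨fun m hm => ?_, hshrink.B_eq⟩
  rcases eq_or_ne m ℓ with rfl | hne
  · refine ⟨hloop.card_A_lt, hshrink.maxA_le.trans ?_⟩
    simpa [initLevel] using ⟨(hst m hm).2, hinit⟩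
  · rw [hshrink.A_eq m hne, hshrink.maxA_eq m hne]
    simpa [initLevel, Function.update_of_ne hne] using hst m hm

omit [DecidableEq α] in
theorem card_update_empty_lt (hn : n = 2 ^ L) (hℓ : ℓ ≤ L) {B : ℕ → Finset α}
    (hB : ∀ m < ℓ, (B m).card < n / 2 ^ m) {m : ℕ} (hm : m ≤ ℓ) :
    (Function.update B ℓ ∅ m).card < n / 2 ^ m := by
  rcases hm.lt_or_eq with hlt | rfl
  · simpa [Function.update_of_ne hlt.ne] using hB m hlt
  · simpa using div_two_pow_pos hn hℓ

theorem LC.bounded (hn : n = 2 ^ L) (h : LC f M n L ℓ st st')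
    (hst : CandidatesBounded n L st) (hprev : (prevB st ℓ).card ≤ 2 * (n / 2 ^ ℓ))
    (hB : ∀ m < ℓ, (st.B m).card < n / 2 ^ m) :
    CandidatesBounded n L st' ∧ BuffersBounded n L st' := by
  induction h with
  | @last _ st₁ hloop =>
    obtain ⟨hbd, hBeq⟩ := hloop.candidatesBounded_of_initLevel hn le_rfl hst hprev
    refine ⟨hbd, fun m hm => ?_⟩
    change (st₁.B m).card < _
    exact hBeq ▸ card_update_empty_lt hn le_rfl hB hm
  | @step _ _ st₁ _ hℓ hloop _ ih =>
    obtain ⟨hbd, hBeq⟩ := hloop.candidatesBounded_of_initLevel hn hℓ.le hst hprev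
    refine ih hbd (by simp [prevB, setXlevel, hBeq]) fun m hm => ?_
    change (st₁.B m).card < _
    exact hBeq ▸ card_update_empty_lt hn hℓ.le hB (Nat.lt_succ_iff.1 hm)

theorem DynStep.bounded (hn : n = 2 ^ L) {op : Oper α} (h : DynStep f M n L st op st')
    (hA : CandidatesBounded n L st) (hB : BuffersBounded n L st) :
    CandidatesBounded n L st' ∧ BuffersBounded n L st' := by
  cases h with
  | @insTrigger _ e ℓs _ hℓs _ hmin hlc =>
    have hbelow : ∀ m < ℓs, ((insB L e st).B m).card < n / 2 ^ m := fun m hm =>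
      lt_of_not_ge fun hge => absurd (hmin m (by omega) hge) (by omega)
    have hB0 : ((insB L e st).B 0).card ≤ n := by
      simpa [insB] using (card_insert_le e (st.B 0)).trans (hB 0 L.zero_le)
    exact hlc.bounded hn hA (card_prevB_le (hn ▸ pow_dvd_pow 2 hℓs) hB0 hbelow) hbelow
  | insNoTrigger _ hsmall => exact ⟨hA, hsmall⟩
  | @delTrigger _ e ℓd _ hℓd _ _ hlc =>
    have hbelow : ∀ m < ℓd, ((delElems e st).B m).card < n / 2 ^ m := fun m hm =>
      hB.delElems e m (by omega)
    have hB0 : ((delElems e st).B 0).card ≤ n := by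
      simpa using (hB.delElems e 0 L.zero_le).le
    exact hlc.bounded hn (hA.delElems e) (card_prevB_le (hn ▸ pow_dvd_pow 2 hℓd) hB0 hbelow)
      hbelow
  | @delNoTrigger e => exact ⟨hA.delElems e, hB.delElems e⟩

theorem DynRun.bounded (hn : n = 2 ^ L) {ops : List (Oper α)} (h : DynRun f M n L ops st) :
    CandidatesBounded n L st ∧ BuffersBounded n L st := by
  induction h with
  | nil =>
    exact ⟨fun m hm => ⟨by simpa [DynState.init] using div_two_pow_pos hn hm,
      by simp [DynState.init]⟩, fun m hm => by simpa [DynState.init] using div_two_pow_pos hn hm⟩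
  | snoc _ hstep ih => exact hstep.bounded hn ih.1 ih.2

end CandidateBound

theorem dynamic_candidate_size_bound_general
    (f : Finset α → ℝ) (M : MatroidOn α)
    (n L : ℕ) (hn : n = 2 ^ L)
    (ops : List (Oper α))
    (st : DynState α) (hrun : DynRun f M n L ops st) :
    ∀ ℓ ≤ L, st.maxA ℓ ≤ 4 * n / 2 ^ ℓ := by
  intro ℓ hℓ
  rw [Nat.mul_div_assoc 4 (hn ▸ pow_dvd_pow 2 hℓ)]
  exact ((hrun.bounded hn).1 ℓ hℓ).2

theorem dynamic_candidate_size_bound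
    (f : Finset α → ℝ) (M : MatroidOn α)
    (hmono : MonotoneFn f) (hnorm : f ∅ = 0) (hsub : SubmodularFn f)
    (n L : ℕ) (hn : n = 2 ^ L)
    (ops : List (Oper α))
    (hins : ops.countP (fun o => o.isIns) ≤ n)
    (hdel : ops.countP (fun o => !o.isIns) ≤ n)
    (st : DynState α) (hrun : DynRun f M n L ops st) :
    ∀ ℓ ≤ L, st.maxA ℓ ≤ 4 * n / 2 ^ ℓ :=
  dynamic_candidate_size_bound_general f M n L hn ops st hrun
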